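/- arXiv:math/9312212 — 2 statements merged into one kernel-verified Lean document; each statement's English description precedes it below -/
import Mathlib

section
/- If c is a 2-place function from (2^κ)^{++} to κ (where κ is an infinite cardinal), then there exist ordinals α₀ < α₁ < α₂ < α₃ < (2^κ)^{++} such that c(α₀,α₂) = c(α₀,α₃) = c(α₁,α₂) = c(α₁,α₃). -/
/-!
Put `μ = (2^κ)^+` and `ν = μ^+`. For every `β ≥ μ` there are fewer than `μ` colours, so
pigeonhole gives `α₀ < α₁ < μ` with `c(α₀, β) = c(α₁, β)`. The triple
`(α₀, α₁, c(α₀, β))` takes at most `μ` values as `β` runs through the `ν > μ` ordinals in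
`[μ, μ + ν)`, so it is the same for two of them, `β < β'`; then `α₀ < α₁ < β < β'` works.
-/

universe u v w

open Cardinal Set

theorem exists_lt_map_eq_of_lift_mk_lt {α : Type v} {β : Type w} [LinearOrder α] {f : α → β}
    (h : lift.{v} #β < lift.{w} #α) : ∃ a b, a < b ∧ f a = f b := by
  obtain ⟨a, b, hf, hab⟩ := Function.not_injective_iff.mp
    fun hf => (lift_mk_le_lift_mk_of_injective hf).not_gt h
  rcases hab.lt_or_gt with hlt | hlt
  exacts [⟨a, b, hlt, hf⟩, ⟨b, a, hlt, hf.symm⟩]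

theorem exists_monochromatic_rectangle {X : Type u} {μ ν : Cardinal.{u}} (hμ : ℵ₀ ≤ μ)
    (hX : #X < μ) (hμν : μ < ν) (c : Ordinal.{u} → Ordinal.{u} → X) :
    ∃ α₀ α₁ α₂ α₃ : Ordinal.{u},
      α₀ < α₁ ∧ α₁ < α₂ ∧ α₂ < α₃ ∧ α₃ < ν.ord ∧
      c α₀ α₂ = c α₀ α₃ ∧ c α₀ α₂ = c α₁ α₂ ∧ c α₀ α₂ = c α₁ α₃ := by
  have hpair : ∀ β, ∃ p : Iio μ.ord × Iio μ.ord, p.1 < p.2 ∧ c p.1 β = c p.2 β := fun β => by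
    obtain ⟨a, b, hab, h⟩ := exists_lt_map_eq_of_lift_mk_lt (f := fun α : Iio μ.ord => c α β)
      (by simpa using hX)
    exact ⟨(a, b), hab, h⟩
  choose p hp_lt hp_eq using hpair
  have hcard : μ * μ * #X < ν := calc
    μ * μ * #X ≤ μ * μ * μ := by gcongr
    _ = μ := by rw [mul_eq_self hμ, mul_eq_self hμ]
    _ < ν := hμν
  obtain ⟨γ, γ', hγ, hpγ⟩ := exists_lt_map_eq_of_lift_mk_lt
    (f := fun γ : Iio ν.ord => (p (μ.ord + γ), c (p (μ.ord + γ)).1 (μ.ord + γ)))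
    (by simpa using lift_strictMono.{u, u + 1} hcard)
  obtain ⟨hp, hcol⟩ := Prod.mk.inj hpγ
  refine ⟨(p (μ.ord + γ)).1, (p (μ.ord + γ)).2, μ.ord + γ, μ.ord + γ', hp_lt _, ?_, ?_, ?_, ?_,
    hp_eq _, ?_⟩
  · exact (p _).2.2.trans_le le_self_add
  · exact add_lt_add_right (Subtype.coe_lt_coe.mpr hγ) _
  · exact Ordinal.isPrincipal_add_ord (hμ.trans hμν.le) (ord_lt_ord.mpr hμν) γ'.2
  · rw [hcol, hp]
  · rw [hcol, hp_eq, hp]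

/-- If `c` is a 2-place function from `(2^κ)^{++}` to `κ` (κ an infinite
cardinal), then there are `α₀ < α₁ < α₂ < α₃ < (2^κ)^{++}` with
`c(α₀,α₂) = c(α₀,α₃) = c(α₁,α₂) = c(α₁,α₃)`. -/
theorem stmt0 (κ : Cardinal.{u}) (hκ : Cardinal.aleph0 ≤ κ)
    (c : Ordinal.{u} → Ordinal.{u} → (Cardinal.ord κ).ToType) :
    ∃ α₀ α₁ α₂ α₃ : Ordinal.{u},
      α₀ < α₁ ∧ α₁ < α₂ ∧ α₂ < α₃ ∧
      α₃ < (Order.succ (Order.succ ((2 : Cardinal.{u}) ^ κ))).ord ∧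
      c α₀ α₂ = c α₀ α₃ ∧ c α₀ α₂ = c α₁ α₂ ∧ c α₀ α₂ = c α₁ α₃ := by
  have hκ_lt : κ < Order.succ (2 ^ κ) := (cantor κ).trans (Order.lt_succ _)
  refine exists_monochromatic_rectangle (hκ.trans hκ_lt.le) ?_ (Order.lt_succ _) c
  simpa using hκ_lt
end

section
/- Let B = B(L) be an interval Boolean algebra over a linear order L, and let a₀, a₁, a₂ ∈ B form a homogeneous triple. Then at least one of the following holds in B: a₀·a₁·(−a₂) = 0, or (−a₀)·(−a₁)·a₂ = 0, or a₁·a₂ = 0, or (−a₁)·(−a₂) = 0. -/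
universe u

/-- `L⁺ = L ∪ {−∞, ∞}`: the order `L` with adjoined minimum `⊥ = −∞` and maximum `⊤ = ∞`. -/
abbrev LPlus (L : Type u) := WithBot (WithTop L)

/-- The embedding of `L` into `L⁺`. -/
def toPlus {L : Type u} (x : L) : LPlus L := ((x : WithTop L) : WithBot (WithTop L))

/-- The half-open interval `[s, t) = {x ∈ L : s ≤ x < t}` with endpoints in `L⁺`. -/
def seg (L : Type u) [LinearOrder L] (s t : LPlus L) : Set L :=
  {x | s ≤ toPlus x ∧ toPlus x < t}

/-- The interval Boolean algebra `B(L)`: the subalgebra of `P(L)` generated by the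
half-open intervals `[s, t)`, `s, t ∈ L⁺`; equivalently, the collection of finite
unions of such intervals. -/
def IntervalAlgebra (L : Type u) [LinearOrder L] : Set (Set L) :=
  {a | ∃ (n : ℕ) (f : Fin n → LPlus L × LPlus L), a = ⋃ i, seg L (f i).1 (f i).2}

/-- Membership in `L* = {x ∈ L : ∃ y < x} ∪ {−∞, ∞}`, the admissible canonical
endpoints. -/
def InStar (L : Type u) [LinearOrder L] (x : LPlus L) : Prop :=
  x = ⊥ ∨ x = ⊤ ∨ ∃ y : L, toPlus y < x

/-- `⋃_{i<n} [l(2i), l(2i+1))`, the union of consecutive pairs of a list of endpoints. -/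
def pairedUnion (L : Type u) [LinearOrder L] (l : List (LPlus L)) : Set L :=
  {x | ∃ (i : ℕ) (h1 : 2 * i < l.length) (h2 : 2 * i + 1 < l.length),
    l[2 * i] ≤ toPlus x ∧ toPlus x < l[2 * i + 1]}

/-- `l` is the canonical representation of `a`: a strictly increasing even-length list
of endpoints in `L*` with `a = ⋃_{i<n} [l(2i), l(2i+1))`. -/
def CanonRep (L : Type u) [LinearOrder L] (a : Set L) (l : List (LPlus L)) : Prop :=
  Even l.length ∧ l.Chain' (· < ·) ∧ (∀ x ∈ l, InStar L x) ∧ a = pairedUnion L l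

/-- `σ : Fin k → L⁺` is the increasing enumeration of `σ_a`: the endpoints of the
canonical representation `l` of `a` together with `−∞` and `∞`. -/
def IsSigmaEnum (L : Type u) [LinearOrder L] (a : Set L) (k : ℕ)
    (σ : Fin k → LPlus L) (l : List (LPlus L)) : Prop :=
  CanonRep L a l ∧ StrictMono σ ∧
    Set.range σ = insert ⊥ (insert ⊤ {x | x ∈ l})

/-! On each gap `[σ t, σ (t+1))` of `σ_a` membership in `a` is constant, determined by the
parity of `t` and by whether `−∞` is a genuine endpoint. Let the finite endpoints of `a₂` lie in
the `r`-th gap of `a₁`. If that is the first or the last gap, then at every point `a₁` or `a₂`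
takes a fixed value, so one of the four cells `a₁^± · a₂^±` is empty. Otherwise the endpoints
of `a₁` and `a₂` all lie in one gap of `a₀`: outside it `a₁` and `a₂` agree, having the same
number of endpoints and the same behaviour at `−∞`, and inside it `a₀` is constant, which
empties `a₀·a₁·(−a₂)` or `(−a₀)·(−a₁)·a₂`. -/

section
variable {α : Type*} {A B C : Set α}

lemma inter_compl_eq_empty_or_of_forall_iff_or_iff {E F : Prop}
    (h : ∀ x, (x ∈ A ↔ E) ∨ (x ∈ B ↔ F)) :
    A ∩ Bᶜ = ∅ ∨ Aᶜ ∩ B = ∅ ∨ A ∩ B = ∅ ∨ Aᶜ ∩ Bᶜ = ∅ := by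
  simp only [Set.eq_empty_iff_forall_notMem, Set.mem_inter_iff, Set.mem_compl_iff]
  by_cases hE : E <;> by_cases hF : F
  · exact Or.inr (Or.inr (Or.inr fun x => by have := h x; tauto))
  · exact Or.inr (Or.inl fun x => by have := h x; tauto)
  · exact Or.inl fun x => by have := h x; tauto
  · exact Or.inr (Or.inr (Or.inl fun x => by have := h x; tauto))

lemma inter_inter_compl_eq_empty_or_of_forall_iff_or_iff {D : Prop}
    (h : ∀ x, (x ∈ B ↔ x ∈ C) ∨ (x ∈ A ↔ D)) :
    A ∩ B ∩ Cᶜ = ∅ ∨ Aᶜ ∩ Bᶜ ∩ C = ∅ := by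
  simp only [Set.eq_empty_iff_forall_notMem, Set.mem_inter_iff, Set.mem_compl_iff]
  by_cases hD : D
  · exact Or.inr fun x => by have := h x; tauto
  · exact Or.inl fun x => by have := h x; tauto

end

section
variable {L : Type u} [LinearOrder L]

lemma toPlus_lt_top (x : L) : toPlus x < ⊤ :=
  WithBot.coe_lt_coe.2 (WithTop.coe_lt_top x)

lemma pairedUnion_cons_cons (s t : LPlus L) (l : List (LPlus L)) :
    pairedUnion L (s :: t :: l) = seg L s t ∪ pairedUnion L l := by
  ext x
  simp only [pairedUnion, seg, Set.mem_union, Set.mem_ofPred_eq]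
  rw [← Nat.or_exists_add_one]
  simp [Nat.mul_succ, Nat.add_one_le_iff]

lemma mem_pairedUnion_iff_odd :
    ∀ {l : List (LPlus L)}, l.Pairwise (· < ·) → Even l.length → ∀ x : L,
      (x ∈ pairedUnion L l ↔ Odd (l.countP (· ≤ toPlus x)))
  | [], _, _, x => by simp [pairedUnion]
  | [_], _, he, _ => by simp at he
  | s :: t :: l, hl, he, x => by
    simp only [List.pairwise_cons, List.mem_cons, forall_eq_or_imp] at hl
    obtain ⟨⟨hst, hsl⟩, htl, hl⟩ := hl
    have ih := mem_pairedUnion_iff_odd hl (by simpa [Nat.even_add_one] using he) x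
    rw [pairedUnion_cons_cons, Set.mem_union, ih, List.countP_cons, List.countP_cons]
    have hzero (hx : toPlus x < t) : l.countP (· ≤ toPlus x) = 0 :=
      List.countP_eq_zero.2 fun z hz => by simpa using hx.trans (htl z hz)
    rcases lt_or_ge (toPlus x) s with hxs | hsx
    · simp [seg, hzero (hxs.trans hst), hxs.not_ge, (hxs.trans hst).not_ge]
    rcases lt_or_ge (toPlus x) t with hxt | htx
    · simp [seg, hzero hxt, hsx, hxt, hxt.not_ge]
    · simp [seg, hsx, htx, htx.not_gt, Nat.odd_add_one]

end

namespace IsSigmaEnum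
variable {L : Type u} [LinearOrder L] {a : Set L} {k : ℕ} {σ : Fin k → LPlus L}
  {l : List (LPlus L)}

lemma mem_range_iff (h : IsSigmaEnum L a k σ l) {z : LPlus L} :
    z ∈ Set.range σ ↔ z = ⊥ ∨ z = ⊤ ∨ z ∈ l := by
  rw [h.2.2]; rfl

lemma apply_eq_bot_iff (h : IsSigmaEnum L a k σ l) (u : Fin k) : σ u = ⊥ ↔ (u : ℕ) = 0 := by
  obtain ⟨v, hv⟩ := h.mem_range_iff.2 (Or.inl rfl)
  have hv0 : (v : ℕ) = 0 := by
    by_contra hne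
    exact not_lt_bot (hv ▸ h.2.1 (show (⟨0, v.pos⟩ : Fin k) < v from Nat.pos_of_ne_zero hne))
  rw [← hv, h.2.1.injective.eq_iff, Fin.ext_iff, hv0]

lemma apply_eq_top_iff (h : IsSigmaEnum L a k σ l) (u : Fin k) :
    σ u = ⊤ ↔ (u : ℕ) + 1 = k := by
  obtain ⟨v, hv⟩ := h.mem_range_iff.2 (Or.inr (Or.inl rfl))
  have hv1 : (v : ℕ) + 1 = k := by
    by_contra hne
    have hlast : v < (⟨k - 1, by omega⟩ : Fin k) := Fin.lt_def.2 (by simp only; omega)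
    exact not_top_lt (hv ▸ h.2.1 hlast)
  rw [← hv, h.2.1.injective.eq_iff, Fin.ext_iff]
  omega

lemma two_le (h : IsSigmaEnum L a k σ l) : 2 ≤ k := by
  obtain ⟨v, hv⟩ := h.mem_range_iff.2 (Or.inr (Or.inl rfl))
  have := (h.apply_eq_top_iff v).1 hv
  have : (v : ℕ) ≠ 0 := fun h0 => bot_ne_top (hv ▸ (h.apply_eq_bot_iff v).2 h0).symm
  omega

lemma apply_mem (h : IsSigmaEnum L a k σ l) {u : Fin k} (hbot : σ u ≠ ⊥) (htop : σ u ≠ ⊤) :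
    σ u ∈ l := by
  simpa [hbot, htop] using h.mem_range_iff.1 (Set.mem_range_self u)

/-- The endpoints of `a` below such `x` are `σ 1, …, σ t`, together with `σ 0 = ⊥` when `−∞`
is a genuine endpoint. -/
lemma mem_iff_of_mem_gap (h : IsSigmaEnum L a k σ l) {t : ℕ} (ht : t + 1 < k) {x : L}
    (hx₁ : σ ⟨t, Nat.lt_of_succ_lt ht⟩ ≤ toPlus x) (hx₂ : toPlus x < σ ⟨t + 1, ht⟩) :
    x ∈ a ↔ (⊥ ∈ l ↔ Even t) := by
  classical
  have hle (u : Fin k) : σ u ≤ toPlus x ↔ (u : ℕ) ≤ t := by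
    refine ⟨fun hu => ?_, fun hu => (h.2.1.monotone (by simpa [Fin.le_def] using hu)).trans hx₁⟩
    by_contra hlt
    exact hx₂.not_ge ((h.2.1.monotone (by simp [Fin.le_def]; omega)).trans hu)
  have himage : insert ⊥ (l.toFinset.filter (· ≤ toPlus x)) =
      (Finset.Iic (⟨t, Nat.lt_of_succ_lt ht⟩ : Fin k)).image σ := by
    ext z
    simp only [Finset.mem_insert, Finset.mem_filter, List.mem_toFinset, Finset.mem_image,
      Finset.mem_Iic]
    constructor
    · rintro (rfl | ⟨hz, hzx⟩)
      · exact ⟨⟨0, by omega⟩, Nat.zero_le t, (h.apply_eq_bot_iff _).2 rfl⟩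
      · obtain ⟨u, rfl⟩ := h.mem_range_iff.2 (Or.inr (Or.inr hz))
        exact ⟨u, (hle u).1 hzx, rfl⟩
    · rintro ⟨u, hu, rfl⟩
      have hux := (hle u).2 hu
      by_cases hbot : σ u = ⊥
      · exact Or.inl hbot
      · exact Or.inr ⟨h.apply_mem hbot (ne_top_of_le_ne_top (toPlus_lt_top x).ne hux), hux⟩
  have hcard := congrArg Finset.card himage
  rw [Finset.card_image_of_injective _ h.2.1.injective, Fin.card_Iic,
    Finset.card_insert_eq_ite] at hcard
  have hcount : l.countP (· ≤ toPlus x) = (l.toFinset.filter (· ≤ toPlus x)).card := by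
    rw [List.countP_eq_length_filter, ← List.toFinset_card_of_nodup
      ((List.isChain_iff_pairwise.1 h.1.2.1).nodup.filter _), List.toFinset_filter]
    simp only [decide_eq_true_eq]
  rw [h.1.2.2.2, mem_pairedUnion_iff_odd (List.isChain_iff_pairwise.1 h.1.2.1) h.1.1, hcount]
  have hbot_mem : ⊥ ∈ l.toFinset.filter (· ≤ toPlus x) ↔ ⊥ ∈ l := by simp
  split_ifs at hcard with hbot
  · simp [hcard, hbot_mem.1 hbot, Nat.odd_add_one]
  · simp [Nat.add_right_cancel hcard, hbot_mem.not.1 hbot]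

lemma mem_iff_of_forall_lt (h : IsSigmaEnum L a k σ l) {x : L}
    (hx : ∀ z ∈ l, z ≠ ⊥ → z ≠ ⊤ → toPlus x < z) : x ∈ a ↔ ⊥ ∈ l := by
  have hk := h.two_le
  have hσ₀ : σ ⟨0, by omega⟩ = ⊥ := (h.apply_eq_bot_iff _).2 rfl
  have hσ₁ : toPlus x < σ ⟨1, by omega⟩ := by
    by_cases htop : σ ⟨1, by omega⟩ = ⊤
    · exact htop ▸ toPlus_lt_top x
    · have hbot : σ ⟨1, by omega⟩ ≠ ⊥ := (h.apply_eq_bot_iff _).not.2 one_ne_zero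
      exact hx _ (h.apply_mem hbot htop) hbot htop
  simpa using h.mem_iff_of_mem_gap (t := 0) (by omega) (hσ₀ ▸ bot_le) hσ₁

lemma mem_iff_of_forall_le (h : IsSigmaEnum L a k σ l) {x : L}
    (hx : ∀ z ∈ l, z ≠ ⊥ → z ≠ ⊤ → z ≤ toPlus x) : x ∈ a ↔ (⊥ ∈ l ↔ Even k) := by
  obtain ⟨m, rfl⟩ : ∃ m, k = m + 2 := ⟨k - 2, by have := h.two_le; omega⟩
  have hσ₁ : σ ⟨m + 1, by omega⟩ = ⊤ := (h.apply_eq_top_iff _).2 rfl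
  have hσ₀ : σ ⟨m, by omega⟩ ≤ toPlus x := by
    by_cases hbot : σ ⟨m, by omega⟩ = ⊥
    · exact hbot ▸ bot_le
    · have htop : σ ⟨m, by omega⟩ ≠ ⊤ := (h.apply_eq_top_iff _).not.2 (by simp)
      exact hx _ (h.apply_mem hbot htop) hbot htop
  simpa [Nat.even_add] using h.mem_iff_of_mem_gap (t := m) (by omega) hσ₀ (hσ₁ ▸ toPlus_lt_top x)

end IsSigmaEnum

def FiniteEndpointsBetween {L : Type u} [LinearOrder L] (l : List (LPlus L)) (c d : LPlus L) :
    Prop :=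
  ∀ s ∈ l, s ≠ ⊥ → s ≠ ⊤ → c < s ∧ s < d

section
variable {L : Type u} [LinearOrder L] {a b : Set L} {k k' : ℕ} {σ : Fin k → LPlus L}
  {τ : Fin k' → LPlus L} {l m : List (LPlus L)}

lemma IsSigmaEnum.finiteEndpointsBetween_of_inner_gap (h : IsSigmaEnum L a k σ l) {r : ℕ}
    (hr : r + 1 < k) (hr₀ : r ≠ 0) (hrk : r + 2 ≠ k) {c d : LPlus L}
    (hl : FiniteEndpointsBetween l c d)
    (hm : FiniteEndpointsBetween m (σ ⟨r, Nat.lt_of_succ_lt hr⟩) (σ ⟨r + 1, hr⟩)) :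
    FiniteEndpointsBetween m c d := by
  have hσ (u : Fin k) (h₀ : (u : ℕ) ≠ 0) (h₁ : (u : ℕ) + 1 ≠ k) : c < σ u ∧ σ u < d := by
    have hbot := (h.apply_eq_bot_iff u).not.2 h₀
    have htop := (h.apply_eq_top_iff u).not.2 h₁
    exact hl _ (h.apply_mem hbot htop) hbot htop
  intro z hz hbot htop
  exact ⟨(hσ ⟨r, Nat.lt_of_succ_lt hr⟩ hr₀ (by simp only; omega)).1.trans (hm z hz hbot htop).1,
    (hm z hz hbot htop).2.trans (hσ ⟨r + 1, hr⟩ (by simp) (by simp only; omega)).2⟩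

/-- Each point lies either in the gap of `a`, where `a` is constant, or beyond all finite
endpoints of `b`, where `b` is constant. -/
lemma IsSigmaEnum.exists_forall_mem_iff_or_mem_iff_of_end_gap (ha : IsSigmaEnum L a k σ l)
    (hb : IsSigmaEnum L b k' τ m) {r : ℕ} (hr : r + 1 < k)
    (hm : FiniteEndpointsBetween m (σ ⟨r, Nat.lt_of_succ_lt hr⟩) (σ ⟨r + 1, hr⟩))
    (hend : r = 0 ∨ r + 2 = k) :
    ∃ E F : Prop, ∀ x, (x ∈ a ↔ E) ∨ (x ∈ b ↔ F) := by
  rcases hend with rfl | hend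
  · refine ⟨⊥ ∈ l ↔ Even 0, ⊥ ∈ m ↔ Even k', fun x => ?_⟩
    rcases lt_or_ge (toPlus x) (σ ⟨1, hr⟩) with hx | hx
    · have hσ₀ : σ ⟨0, by omega⟩ = ⊥ := (ha.apply_eq_bot_iff _).2 rfl
      exact Or.inl (ha.mem_iff_of_mem_gap hr (hσ₀ ▸ bot_le) hx)
    · exact Or.inr (hb.mem_iff_of_forall_le fun z hz h₁ h₂ => ((hm z hz h₁ h₂).2.trans_le hx).le)
  · refine ⟨⊥ ∈ l ↔ Even r, ⊥ ∈ m, fun x => ?_⟩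
    rcases le_or_gt (toPlus x) (σ ⟨r, Nat.lt_of_succ_lt hr⟩) with hx | hx
    · exact Or.inr (hb.mem_iff_of_forall_lt fun z hz h₁ h₂ => hx.trans_lt (hm z hz h₁ h₂).1)
    · have hσ₁ : σ ⟨r + 1, hr⟩ = ⊤ := (ha.apply_eq_top_iff _).2 hend
      exact Or.inl (ha.mem_iff_of_mem_gap hr hx.le (hσ₁ ▸ toPlus_lt_top x))

/-- Below and above all finite endpoints, `a₁` and `a₂` take the same constant values, as they
have the same number `k` of endpoints and agree at `−∞`. -/
lemma IsSigmaEnum.forall_mem_iff_mem_or_mem_iff_of_gap {a₀ a₁ a₂ : Set L} {k₀ : ℕ}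
    {σ₀ : Fin k₀ → LPlus L} {σ₁ σ₂ : Fin k → LPlus L} {l₀ l₁ l₂ : List (LPlus L)}
    (h₀ : IsSigmaEnum L a₀ k₀ σ₀ l₀) (h₁ : IsSigmaEnum L a₁ k σ₁ l₁)
    (h₂ : IsSigmaEnum L a₂ k σ₂ l₂) {p : ℕ} (hp : p + 1 < k₀)
    (hl₁ : FiniteEndpointsBetween l₁ (σ₀ ⟨p, Nat.lt_of_succ_lt hp⟩) (σ₀ ⟨p + 1, hp⟩))
    (hl₂ : FiniteEndpointsBetween l₂ (σ₀ ⟨p, Nat.lt_of_succ_lt hp⟩) (σ₀ ⟨p + 1, hp⟩))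
    (hbot : ⊥ ∈ l₁ ↔ ⊥ ∈ l₂) (x : L) :
    (x ∈ a₁ ↔ x ∈ a₂) ∨ (x ∈ a₀ ↔ (⊥ ∈ l₀ ↔ Even p)) := by
  rcases le_or_gt (toPlus x) (σ₀ ⟨p, Nat.lt_of_succ_lt hp⟩) with hx | hx
  · rw [h₁.mem_iff_of_forall_lt fun z hz h h' => hx.trans_lt (hl₁ z hz h h').1,
      h₂.mem_iff_of_forall_lt fun z hz h h' => hx.trans_lt (hl₂ z hz h h').1]
    exact Or.inl hbot
  rcases lt_or_ge (toPlus x) (σ₀ ⟨p + 1, hp⟩) with hx' | hx'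
  · exact Or.inr (h₀.mem_iff_of_mem_gap hp hx.le hx')
  · rw [h₁.mem_iff_of_forall_le fun z hz h h' => ((hl₁ z hz h h').2.trans_le hx').le,
      h₂.mem_iff_of_forall_le fun z hz h h' => ((hl₂ z hz h h').2.trans_le hx').le]
    exact Or.inl (iff_congr hbot Iff.rfl)

end

/-- If `a₀, a₁, a₂` form a homogeneous triple in an interval Boolean
algebra `B(L)`, then `a₀·a₁·(−a₂) = 0`, or `(−a₀)·(−a₁)·a₂ = 0`, or `a₁·a₂ = 0`, or
`(−a₁)·(−a₂) = 0`. -/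
theorem stmt6 (L : Type u) [LinearOrder L] (a : Fin 3 → Set L)
    (k : ℕ) (σ : Fin 3 → Fin k → LPlus L) (l : Fin 3 → List (LPlus L))
    -- `σ i` enumerates the endpoint set `σ_{a i}` of the canonical representation `l i`
    (henum : ∀ i, IsSigmaEnum L (a i) k (σ i) (l i))
    -- homogeneity (2): which of ±∞ are genuine endpoints is the same for all i
    (hends : ∀ i j : Fin 3, ((⊥ : LPlus L) ∈ l i ↔ (⊥ : LPlus L) ∈ l j) ∧
      ((⊤ : LPlus L) ∈ l i ↔ (⊤ : LPlus L) ∈ l j))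
    -- homogeneity (3): for i < j all finite endpoints of `a j` lie strictly between
    -- two consecutive endpoints of `a i`
    (hhom : ∀ i j : Fin 3, i < j → ∃ (ℓ : ℕ) (h : ℓ + 1 < k),
      ∀ s ∈ l j, s ≠ ⊥ → s ≠ ⊤ →
        σ i ⟨ℓ, by omega⟩ < s ∧ s < σ i ⟨ℓ + 1, h⟩) :
    a 0 ∩ a 1 ∩ (a 2)ᶜ = ∅ ∨ (a 0)ᶜ ∩ (a 1)ᶜ ∩ a 2 = ∅ ∨
    a 1 ∩ a 2 = ∅ ∨ (a 1)ᶜ ∩ (a 2)ᶜ = ∅ := by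
  obtain ⟨p, hp, hl₁⟩ := hhom 0 1 (by decide)
  obtain ⟨r, hr, hl₂⟩ := hhom 1 2 (by decide)
  by_cases hend : r = 0 ∨ r + 2 = k
  · obtain ⟨E, F, hEF⟩ :=
      (henum 1).exists_forall_mem_iff_or_mem_iff_of_end_gap (henum 2) hr hl₂ hend
    have hsub {A B C : Set L} : A ∩ B ∩ C ⊆ B ∩ C :=
      Set.inter_subset_inter_left _ Set.inter_subset_right
    rcases inter_compl_eq_empty_or_of_forall_iff_or_iff hEF with h | h | h | h
    · exact Or.inl (Set.subset_eq_empty hsub h)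
    · exact Or.inr (Or.inl (Set.subset_eq_empty hsub h))
    · exact Or.inr (Or.inr (Or.inl h))
    · exact Or.inr (Or.inr (Or.inr h))
  · obtain ⟨hr₀, hrk⟩ := not_or.1 hend
    have hl₂' := (henum 1).finiteEndpointsBetween_of_inner_gap hr hr₀ hrk hl₁ hl₂
    exact (inter_inter_compl_eq_empty_or_of_forall_iff_or_iff
      ((henum 0).forall_mem_iff_mem_or_mem_iff_of_gap (henum 1) (henum 2) hp hl₁ hl₂'
        (hends 1 2).1)).imp_right Or.inl
end
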